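/- Let Q = [v_1,…,v_r] and R = [w_1,…,w_s] be induced paths of a finite simple block graph which intersect non-trivially (V(Q) ∩ V(R) ≠ ∅). Then Q ∩ R is connected, and there is a unique decomposition Q = Q_1 * γ * Q_2 and R = R_1 * γ * R_2, where γ = Q ∩ R and Q_1, Q_2 (respectively R_1, R_2) are possibly single-vertex subpaths of Q (respectively of R). -/

import Mathlib

open SimpleGraph

/-- An induced path in a simple graph `G`: a walk which is a path and such that the
subgraph of `G` induced on its vertex set equals the path. -/
structure InducedPath {V : Type*} (G : SimpleGraph V) where
  first : V
  last : V
  walk : G.Walk first last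
  isPath : walk.IsPath
  induced : ∀ x ∈ walk.support, ∀ y ∈ walk.support, G.Adj x y → s(x, y) ∈ walk.edges

namespace InducedPath

variable {V : Type*} {G : SimpleGraph V}

/-- The vertex set of an induced path. -/
def vertexSet (P : InducedPath G) : Set V := {v | v ∈ P.walk.support}

/-- The edge set of an induced path. -/
def edgeSet (P : InducedPath G) : Set (Sym2 V) := {e | e ∈ P.walk.edges}

/-- The terminal vertices `∂P` of an induced path. -/
def boundary (P : InducedPath G) : Set V := {P.first, P.last}

/-- The internal vertices `P°` of an induced path. -/
def interior (P : InducedPath G) : Set V := P.vertexSet \ P.boundary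

end InducedPath

section FamilyDefs

variable {V : Type*} (G : SimpleGraph V) {ℓ : ℕ}

/-- `Q` contains `P` as a subgraph. -/
def PathContains (Q P : InducedPath G) : Prop :=
  P.vertexSet ⊆ Q.vertexSet ∧ P.edgeSet ⊆ Q.edgeSet

/-- The vertex set of `P_ind`, the induced subgraph on `⋃ i, V(P i)`. -/
def famVerts (P : Fin ℓ → InducedPath G) : Set V := ⋃ i, (P i).vertexSet

/-- The union of the edge sets of the paths `P i`. -/
def famEdges (P : Fin ℓ → InducedPath G) : Set (Sym2 V) := ⋃ i, (P i).edgeSet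

/-- The paths `P i` are pairwise vertex-disjoint. -/
def PairwiseVertexDisjoint (P : Fin ℓ → InducedPath G) : Prop :=
  ∀ i j : Fin ℓ, i ≠ j → Disjoint (P i).vertexSet (P j).vertexSet

/-- `φ` is an orientation of the induced path `P`, i.e. a surjection `{1,2} → ∂P`. -/
def IsOrientation (P : InducedPath G) (φ : Fin 2 → V) : Prop :=
  Set.range φ = P.boundary

/-- `Q` is an induced path of `P_ind` (equivalently, an induced path of `G` all of whose
vertices belong to `⋃ i, V(P i)`). -/
def IsPathOfInd (P : Fin ℓ → InducedPath G) (Q : InducedPath G) : Prop :=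
  Q.vertexSet ⊆ famVerts G P

/-- The data `(P, σ, φ)` is DOIP. -/
def IsDOIPData (P : Fin ℓ → InducedPath G) (σ : Equiv.Perm (Fin ℓ))
    (φ : Fin ℓ → Fin 2 → V) : Prop :=
  (∀ i, IsOrientation G (P i) (φ i)) ∧
    ∀ i j : Fin ℓ, σ i ≤ σ j → ∀ Q : InducedPath G, IsPathOfInd G P Q →
      ({Q.first, Q.last} : Set V) = {φ (σ i) 0, φ (σ j) 1} →
      ∃ k, PathContains G Q (P k)

/-- The family `P` is DOIP: there exist `σ` and orientations making it DOIP. -/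
def FamilyDOIP (P : Fin ℓ → InducedPath G) : Prop :=
  ∃ (σ : Equiv.Perm (Fin ℓ)) (φ : Fin ℓ → Fin 2 → V), IsDOIPData G P σ φ

/-- `Q` realizes an arc `(i,j)` of the directed multigraph `K_{P_ind}`. -/
def KArcWitness (P : Fin ℓ → InducedPath G) (φ : Fin ℓ → Fin 2 → V) (i j : Fin ℓ)
    (Q : InducedPath G) : Prop :=
  IsPathOfInd G P Q ∧ ({Q.first, Q.last} : Set V) = {φ i 0, φ j 1} ∧
    ∀ k, ¬ PathContains G Q (P k)

/-- `(i,j)` is an arc of `K_{P_ind}`. -/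
def KArc (P : Fin ℓ → InducedPath G) (φ : Fin ℓ → Fin 2 → V) (i j : Fin ℓ) : Prop :=
  ∃ Q : InducedPath G, KArcWitness G P φ i j Q

/-- The directed multigraph `K_{P_ind}` is directed acyclic (no loops and no directed
cycles). -/
def KAcyclic (P : Fin ℓ → InducedPath G) (φ : Fin ℓ → Fin 2 → V) : Prop :=
  ∀ i : Fin ℓ, ¬ Relation.TransGen (KArc G P φ) i i

/-- `Q` is a strand of `P_ind` from `P i` to `P j`. -/
def IsStrand (P : Fin ℓ → InducedPath G) (φ : Fin ℓ → Fin 2 → V) (i j : Fin ℓ)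
    (Q : InducedPath G) : Prop :=
  i ≠ j ∧ IsPathOfInd G P Q ∧ Q.first ≠ φ i 1 ∧ Q.last ≠ φ j 0 ∧
    Q.vertexSet ∩ (P i).vertexSet = {Q.first} ∧
    Q.vertexSet ∩ (P j).vertexSet = {Q.last} ∧
    ∀ k, ¬ PathContains G Q (P k)

/-- `Q` is an internal strand of `P_ind` from `P i` to `P j`. -/
def IsInternalStrand (P : Fin ℓ → InducedPath G) (i j : Fin ℓ) (Q : InducedPath G) : Prop :=
  i ≠ j ∧ IsPathOfInd G P Q ∧
    Q.first ∈ (P i).interior ∧ Q.last ∈ (P j).interior ∧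
    Q.vertexSet ∩ (P i).vertexSet = {Q.first} ∧
    Q.vertexSet ∩ (P j).vertexSet = {Q.last} ∧
    ∀ k, ¬ PathContains G Q (P k)

/-- `(Q, b, c)` is an internal fork of `P_ind` from `P i` to `P j`. -/
def IsInternalFork (P : Fin ℓ → InducedPath G) (i j : Fin ℓ) (Q : InducedPath G)
    (b c : V) : Prop :=
  i ≠ j ∧ IsPathOfInd G P Q ∧ Q.first ∈ (P i).interior ∧
    Q.vertexSet ∩ (P i).vertexSet = {Q.first} ∧
    Q.vertexSet ∩ (P j).vertexSet = ∅ ∧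
    b ∈ (P j).vertexSet ∧ c ∈ (P j).vertexSet ∧ b ≠ c ∧
    G.Adj Q.last b ∧ G.Adj Q.last c ∧
    ∀ k, ¬ PathContains G Q (P k)

/-- `(Q, a, b, c, d)` is a double fork of `P_ind` from `P i` to `P j`. -/
def IsDoubleFork (P : Fin ℓ → InducedPath G) (i j : Fin ℓ) (Q : InducedPath G)
    (a b c d : V) : Prop :=
  i ≠ j ∧ IsPathOfInd G P Q ∧
    Q.vertexSet ∩ (P i).vertexSet = ∅ ∧
    Q.vertexSet ∩ (P j).vertexSet = ∅ ∧
    a ∈ (P i).vertexSet ∧ b ∈ (P i).vertexSet ∧ a ≠ b ∧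
    c ∈ (P j).vertexSet ∧ d ∈ (P j).vertexSet ∧ c ≠ d ∧
    G.Adj Q.first a ∧ G.Adj Q.first b ∧ G.Adj Q.last c ∧ G.Adj Q.last d ∧
    ∀ k, ¬ PathContains G Q (P k)

/-- `(a, b, c, d)` is a complete ladder of `P_ind` between `P i` and `P j`. -/
def IsCompleteLadder (P : Fin ℓ → InducedPath G) (i j : Fin ℓ) (a b c d : V) : Prop :=
  i ≠ j ∧ a ∈ (P i).vertexSet ∧ b ∈ (P i).vertexSet ∧ a ≠ b ∧
    c ∈ (P j).vertexSet ∧ d ∈ (P j).vertexSet ∧ c ≠ d ∧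
    G.Adj a b ∧ G.Adj a c ∧ G.Adj a d ∧ G.Adj b c ∧ G.Adj b d ∧ G.Adj c d

/-- `P_ind` contains an internal strand, an internal fork, a double fork, or a
complete ladder. -/
def HasForbidden (P : Fin ℓ → InducedPath G) : Prop :=
  (∃ i j Q, IsInternalStrand G P i j Q) ∨
  (∃ i j Q b c, IsInternalFork G P i j Q b c) ∨
  (∃ i j Q a b c d, IsDoubleFork G P i j Q a b c d) ∨
  (∃ i j a b c d, IsCompleteLadder G P i j a b c d)

/-- `P_ind` contains a complete ladder, or an internal strand, internal fork, or double
fork which is edge-disjoint from the family `P`. -/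
def HasForbiddenEdgeDisjoint (P : Fin ℓ → InducedPath G) : Prop :=
  (∃ i j Q, IsInternalStrand G P i j Q ∧ Disjoint Q.edgeSet (famEdges G P)) ∨
  (∃ i j Q b c, IsInternalFork G P i j Q b c ∧
    Disjoint (Q.edgeSet ∪ {s(Q.last, b), s(Q.last, c)}) (famEdges G P)) ∨
  (∃ i j Q a b c d, IsDoubleFork G P i j Q a b c d ∧
    Disjoint (Q.edgeSet ∪ {s(Q.first, a), s(Q.first, b), s(Q.last, c), s(Q.last, d)})
      (famEdges G P)) ∨
  (∃ i j a b c d, IsCompleteLadder G P i j a b c d)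

end FamilyDefs

section Invariants

variable {V : Type*}

/-- The invariant `ν(G)`: the maximal total number of edges of a family of
vertex-disjoint induced paths of `G` which is DOIP. -/
noncomputable def nu (G : SimpleGraph V) : ℕ :=
  sSup {n : ℕ | ∃ (ℓ : ℕ) (P : Fin ℓ → InducedPath G),
    PairwiseVertexDisjoint G P ∧ FamilyDOIP G P ∧ n = ∑ i, (P i).walk.length}

/-- `ℓ(G)`: the number of edges of a longest induced path of `G`. -/
noncomputable def longestInducedPathLength (G : SimpleGraph V) : ℕ :=
  sSup {n : ℕ | ∃ P : InducedPath G, n = P.walk.length}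

end Invariants

section BlockGraphs

variable {V : Type*} {G : SimpleGraph V}

/-- A subgraph is biconnected if it is connected and remains connected after
deleting any single vertex. -/
def SubgraphBiconnected (H : G.Subgraph) : Prop :=
  H.coe.Connected ∧ ∀ v : V, ((H.deleteVerts {v}).coe).Connected

/-- A block of `G` is a maximal biconnected subgraph. -/
def IsBlock (H : G.Subgraph) : Prop :=
  SubgraphBiconnected H ∧ ∀ H' : G.Subgraph, SubgraphBiconnected H' → H ≤ H' → H' = H

/-- `G` is a block graph if every block of `G` is a complete graph. -/
def IsBlockGraph (G : SimpleGraph V) : Prop :=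
  ∀ H : G.Subgraph, IsBlock H → ∀ a ∈ H.verts, ∀ b ∈ H.verts, a ≠ b → H.Adj a b

/-- The intersection `Q ∩ R` of two induced paths, as a subgraph of `G`. -/
def pathsInter (Q R : InducedPath G) : G.Subgraph where
  verts := Q.vertexSet ∩ R.vertexSet
  Adj a b := G.Adj a b ∧ s(a, b) ∈ Q.walk.edges ∧ s(a, b) ∈ R.walk.edges
  adj_sub h := h.1
  edge_vert h := ⟨Q.walk.fst_mem_support_of_mem_edges h.2.1,
    R.walk.fst_mem_support_of_mem_edges h.2.2⟩
  symm := by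
    constructor
    intro a b h
    refine ⟨h.1.symm, ?_, ?_⟩
    · rw [Sym2.eq_swap]; exact h.2.1
    · rw [Sym2.eq_swap]; exact h.2.2

/-- `s` is a maximal clique of `G`. -/
def IsMaxClique (G : SimpleGraph V) (s : Set V) : Prop :=
  G.IsClique s ∧ ∀ t : Set V, G.IsClique t → s ⊆ t → s = t

/-- `G` has the two-block property: every vertex belongs to at most two maximal
cliques. -/
def TwoBlockProperty (G : SimpleGraph V) : Prop :=
  ∀ v : V, ({s : Set V | IsMaxClique G s ∧ v ∈ s}).ncard ≤ 2

/-- The completion `G_c` of `G` at the vertex `c`. -/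
def completionAt (G : SimpleGraph V) (c : V) : SimpleGraph V where
  Adj u w := G.Adj u w ∨ (u ≠ w ∧ G.Adj c u ∧ G.Adj c w)
  symm := by
    constructor
    intro u w h
    rcases h with h | ⟨hne, h1, h2⟩
    · exact Or.inl h.symm
    · exact Or.inr ⟨hne.symm, h2, h1⟩
  loopless := by
    constructor
    intro u h
    rcases h with h | ⟨hne, _, _⟩
    · exact G.irrefl h
    · exact hne rfl

/-- The number of connected components of a graph. -/
noncomputable def numComponents (G : SimpleGraph V) : ℕ :=
  Nat.card G.ConnectedComponent

/-- `c` is a cut vertex of `G`: deleting it strictly increases the number of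
connected components. -/
def IsCutVertex (G : SimpleGraph V) (c : V) : Prop :=
  numComponents G < numComponents (G.induce ({c}ᶜ : Set V))

end BlockGraphs

/-!
Every cycle of a block graph is biconnected, so it lies in a block and its vertices form a
clique. Hence two vertices are joined by at most one chordless path: two different ones would
contain a cycle made of two chordless paths between adjacent vertices, i.e. of two single edges,
which is too short to be a cycle.
Cut `Q` at its first and its last vertex on `R`. The middle piece of `Q` and the piece of `R`
between the same two vertices are chordless paths with common ends, so they coincide; thus the
middle piece is exactly `Q ∩ R`. A path is cut by a vertex set into three such pieces in at most
one way, which gives uniqueness.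
-/

namespace SimpleGraph.Walk

variable {V : Type*} {G : SimpleGraph V} {u v w : V}

theorem IsPath.eq_of_mem_support_of_mem_support {p : G.Walk u v} {q : G.Walk v w}
    (h : (p.append q).IsPath) {x : V} (hp : x ∈ p.support) (hq : x ∈ q.support) : x = v := by
  by_contra hne
  exact h.ne_of_mem_support_of_append hne hp hq rfl

theorem IsPath.append_inj {p₁ p₂ : G.Walk u v} {q₁ q₂ : G.Walk v w}
    (hp : (p₁.append q₁).IsPath) (h : p₁.append q₁ = p₂.append q₂) : p₁ = p₂ ∧ q₁ = q₂ := by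
  induction p₁ with
  | nil =>
    obtain rfl := eq_nil_iff_nil.mpr (isPath_iff_nil.mp (h ▸ hp).of_append_left)
    simpa using h
  | cons hadj p₁ ih =>
    cases p₂ with
    | nil => simpa using hp.of_append_left
    | cons hadj' p₂ =>
      simp only [cons_append, cons.injEq] at h
      obtain ⟨rfl, h⟩ := h
      obtain ⟨rfl, rfl⟩ := ih hp.of_cons (eq_of_heq h)
      simp

theorem IsPath.eq_of_append_eq_append {v₁ v₂ : V} {p₁ : G.Walk u v₁} {q₁ : G.Walk v₁ w}
    {p₂ : G.Walk u v₂} {q₂ : G.Walk v₂ w} (hp : (p₁.append q₁).IsPath)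
    (h : p₁.append q₁ = p₂.append q₂) (h₁ : v₁ ∈ q₂.support) (h₂ : v₂ ∈ q₁.support) :
    v₁ = v₂ := by
  have hpre₁ : p₁.support <+: (p₁.append q₁).support := by
    rw [support_append]; exact List.prefix_append _ _
  have hpre₂ : p₂.support <+: (p₁.append q₁).support := by
    rw [h, support_append]; exact List.prefix_append _ _
  rcases List.prefix_or_prefix_of_prefix hpre₁ hpre₂ with h12 | h21
  · exact (h ▸ hp).eq_of_mem_support_of_mem_support (h12.subset p₁.end_mem_support) h₁
  · exact (hp.eq_of_mem_support_of_mem_support (h21.subset p₂.end_mem_support) h₂).symm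

theorem IsPath.append_append_inj {c₁ d₁ c₂ d₂ : V} {p₁ : G.Walk u c₁} {g₁ : G.Walk c₁ d₁}
    {q₁ : G.Walk d₁ v} {p₂ : G.Walk u c₂} {g₂ : G.Walk c₂ d₂} {q₂ : G.Walk d₂ v}
    (hp : (p₁.append (g₁.append q₁)).IsPath)
    (h : p₁.append (g₁.append q₁) = p₂.append (g₂.append q₂))
    (hg : ∀ x, x ∈ g₁.support ↔ x ∈ g₂.support) :
    c₁ = c₂ ∧ d₁ = d₂ ∧ p₁ ≍ p₂ ∧ g₁ ≍ g₂ ∧ q₁ ≍ q₂ := by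
  obtain rfl : c₁ = c₂ := hp.eq_of_append_eq_append h
    (support_subset_support_append_left _ _ ((hg c₁).mp g₁.start_mem_support))
    (support_subset_support_append_left _ _ ((hg c₂).mpr g₂.start_mem_support))
  obtain ⟨rfl, hgq⟩ := hp.append_inj h
  have hp' : (q₁.reverse.append g₁.reverse).IsPath := by
    rw [← reverse_append]; exact hp.of_append_right.reverse
  have h' : q₁.reverse.append g₁.reverse = q₂.reverse.append g₂.reverse := by
    rw [← reverse_append, ← reverse_append, hgq]
  obtain rfl : d₁ = d₂ := hp'.eq_of_append_eq_append h'
    (by simpa using (hg d₁).mp g₁.end_mem_support)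
    (by simpa using (hg d₂).mpr g₂.end_mem_support)
  obtain ⟨rfl, rfl⟩ := hp.of_append_right.append_inj hgq
  exact ⟨rfl, rfl, .rfl, .rfl, .rfl⟩

theorem exists_split_at_first_mem (p : G.Walk u v) {S : Set V} (h : ∃ x ∈ p.support, x ∈ S) :
    ∃ c ∈ S, ∃ (p₁ : G.Walk u c) (p₂ : G.Walk c v),
      p = p₁.append p₂ ∧ ∀ x ∈ p₁.support, x ∈ S → x = c := by
  induction p with
  | nil =>
    obtain ⟨x, hx, hxS⟩ := h
    rw [mem_support_nil_iff] at hx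
    subst hx
    exact ⟨x, hxS, nil, nil, rfl, by simp⟩
  | @cons u _ _ hadj p ih =>
    by_cases hu : u ∈ S
    · exact ⟨u, hu, nil, cons hadj p, rfl, by simp⟩
    obtain ⟨x, hx, hxS⟩ := h
    have hxp : x ∈ p.support := by
      rw [support_cons, List.mem_cons] at hx
      exact hx.resolve_left (by rintro rfl; exact hu hxS)
    obtain ⟨c, hc, p₁, p₂, rfl, hfirst⟩ := ih ⟨x, hxp, hxS⟩
    refine ⟨c, hc, cons hadj p₁, p₂, rfl, ?_⟩
    simp only [support_cons, List.mem_cons, forall_eq_or_imp]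
    exact ⟨fun h ↦ absurd h hu, hfirst⟩

theorem exists_split_at_last_mem (p : G.Walk u v) {S : Set V} (h : ∃ x ∈ p.support, x ∈ S) :
    ∃ d ∈ S, ∃ (p₁ : G.Walk u d) (p₂ : G.Walk d v),
      p = p₁.append p₂ ∧ ∀ x ∈ p₂.support, x ∈ S → x = d := by
  obtain ⟨d, hd, p₁, p₂, hp, hlast⟩ := p.reverse.exists_split_at_first_mem (by simpa using h)
  refine ⟨d, hd, p₂.reverse, p₁.reverse, ?_, by simpa using hlast⟩
  rw [← reverse_append, ← hp, reverse_reverse]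

@[simp]
theorem isChordless_reverse {p : G.Walk u v} : p.reverse.IsChordless ↔ p.IsChordless := by
  simp [isChordless_iff_forall_mem_edges]

theorem IsChordless.of_append_left {p : G.Walk u v} {q : G.Walk v w} (hpq : (p.append q).IsPath)
    (h : (p.append q).IsChordless) : p.IsChordless := by
  rw [isChordless_iff_forall_mem_edges]
  intro x y hx hy hxy
  have he := h.mem_edges (support_subset_support_append_left _ _ hx)
    (support_subset_support_append_left _ _ hy) hxy
  rw [edges_append, List.mem_append] at he
  refine he.resolve_right fun he ↦ hxy.ne ?_
  rw [hpq.eq_of_mem_support_of_mem_support hx (q.fst_mem_support_of_mem_edges he),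
    hpq.eq_of_mem_support_of_mem_support hy (q.snd_mem_support_of_mem_edges he)]

theorem IsChordless.of_append_right {p : G.Walk u v} {q : G.Walk v w}
    (hpq : (p.append q).IsPath) (h : (p.append q).IsChordless) : q.IsChordless := by
  rw [← isChordless_reverse] at h ⊢
  rw [reverse_append] at h
  exact h.of_append_left (by rw [← reverse_append]; exact hpq.reverse)

theorem IsChordless.of_isSubwalk {u' v' : V} {p : G.Walk u v} {q : G.Walk u' v'} (hq : q.IsPath)
    (hqc : q.IsChordless) (h : p.IsSubwalk q) : p.IsChordless := by
  obtain ⟨r₁, r₂, rfl⟩ := h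
  exact (hqc.of_append_left hq).of_append_right hq.of_append_left

theorem IsChordless.exists_subpath {p : G.Walk u v} (hp : p.IsPath) (hpc : p.IsChordless)
    {c d : V} (hc : c ∈ p.support) (hd : d ∈ p.support) :
    ∃ s : G.Walk c d, s.IsPath ∧ s.IsChordless ∧ s.support ⊆ p.support := by
  obtain ⟨p₁, p₂, rfl⟩ := mem_support_iff_exists_append.mp hc
  rcases (mem_support_append_iff _ _).mp hd with hd | hd
  · obtain ⟨s₁, s₂, rfl⟩ := mem_support_iff_exists_append.mp hd
    have hs : s₂.IsSubwalk ((s₁.append s₂).append p₂) := ⟨s₁, p₂, rfl⟩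
    exact ⟨s₂.reverse, (isPath_of_isSubwalk hs hp).reverse,
      isChordless_reverse.mpr (hpc.of_isSubwalk hp hs), by simpa using hs.support_subset⟩
  · obtain ⟨s₁, s₂, rfl⟩ := mem_support_iff_exists_append.mp hd
    have hs : s₁.IsSubwalk (p₁.append (s₁.append s₂)) := ⟨p₁, s₂, by rw [append_assoc]⟩
    exact ⟨s₁, isPath_of_isSubwalk hs hp, hpc.of_isSubwalk hp hs, hs.support_subset⟩

theorem IsChordless.mem_edges_iff_of_mem_support_iff {a b a' b' : V} {g : G.Walk u v}
    {p : G.Walk a b} {q : G.Walk a' b'} (hg : g.IsChordless) (hp : p.IsChordless)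
    (hq : q.IsChordless) (h : ∀ x, x ∈ g.support ↔ x ∈ p.support ∧ x ∈ q.support) (e : Sym2 V) :
    e ∈ g.edges ↔ e ∈ p.edges ∧ e ∈ q.edges := by
  refine Sym2.ind (fun x y ↦ ⟨fun he ↦ ?_, fun ⟨hep, heq⟩ ↦ ?_⟩) e
  · have hx := (h x).mp (g.fst_mem_support_of_mem_edges he)
    have hy := (h y).mp (g.snd_mem_support_of_mem_edges he)
    have hxy := g.adj_of_mem_edges he
    exact ⟨hp.mem_edges hx.1 hy.1 hxy, hq.mem_edges hx.2 hy.2 hxy⟩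
  · have hx := (h x).mpr ⟨p.fst_mem_support_of_mem_edges hep, q.fst_mem_support_of_mem_edges heq⟩
    have hy := (h y).mpr ⟨p.snd_mem_support_of_mem_edges hep, q.snd_mem_support_of_mem_edges heq⟩
    exact hg.mem_edges hx hy (p.adj_of_mem_edges hep)

theorem toSubgraph_cons_concat_deleteVerts {x y : V} (h : G.Adj v x) (q : G.Walk x y)
    (h' : G.Adj y v) (hv : v ∉ q.support) :
    (cons h (q.concat h')).toSubgraph.deleteVerts {v} = q.toSubgraph := by
  have := q.start_mem_support
  ext a b <;> simp [concat, adj_toSubgraph_iff_mem_edges] <;>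
    grind [fst_mem_support_of_mem_edges, snd_mem_support_of_mem_edges]

theorem IsCycle.connected_toSubgraph_deleteVerts_start {c : G.Walk v v} (hc : c.IsCycle) :
    (c.toSubgraph.deleteVerts {v}).Connected := by
  cases c with
  | nil => exact (hc.ne_nil rfl).elim
  | cons h p =>
    have hp := ((cons_isCycle_iff p h).mp hc).1
    have hnil : ¬ p.Nil := not_nil_of_ne h.ne.symm
    rw [← concat_dropLast (p.adj_penultimate hnil)] at hp ⊢
    rw [toSubgraph_cons_concat_deleteVerts _ _ _ ((concat_isPath_iff _).mp hp).2]
    exact p.dropLast.toSubgraph_connected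

theorem IsCycle.subgraphBiconnected_toSubgraph {c : G.Walk v v} (hc : c.IsCycle) :
    SubgraphBiconnected c.toSubgraph := by
  classical
  refine ⟨c.toSubgraph_connected.coe, fun u ↦ ?_⟩
  by_cases hu : u ∈ c.support
  · rw [← toSubgraph_rotate c hu]
    exact (hc.rotate hu).connected_toSubgraph_deleteVerts_start.coe
  · rw [← Subgraph.deleteVerts_inter_verts_left_eq,
      show c.toSubgraph.verts ∩ {u} = ∅ by simpa using hu, Subgraph.deleteVerts_empty]
    exact c.toSubgraph_connected.coe

end SimpleGraph.Walk

section InducedPaths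

variable {V : Type*} {G : SimpleGraph V}

theorem InducedPath.isChordless (P : InducedPath G) : P.walk.IsChordless :=
  Walk.isChordless_iff_forall_mem_edges.mpr fun _ _ hx hy hxy ↦ P.induced _ hx _ hy hxy

theorem pathsInter_eq_toSubgraph (Q R : InducedPath G) {c d : V} {g : G.Walk c d}
    (hV : ∀ x, x ∈ g.support ↔ x ∈ Q.walk.support ∧ x ∈ R.walk.support)
    (hE : ∀ e, e ∈ g.edges ↔ e ∈ Q.walk.edges ∧ e ∈ R.walk.edges) :
    pathsInter Q R = g.toSubgraph := by
  ext x y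
  · rw [Walk.mem_verts_toSubgraph, hV]
    rfl
  · rw [Walk.adj_toSubgraph_iff_mem_edges, hE]
    exact ⟨fun h ↦ h.2, fun h ↦ ⟨Q.walk.adj_of_mem_edges h.1, h⟩⟩

end InducedPaths

section BlockGraph

open Walk

variable {V : Type*} [Finite V] {G : SimpleGraph V}

theorem SubgraphBiconnected.exists_isBlock_le {H : G.Subgraph} (hH : SubgraphBiconnected H) :
    ∃ K : G.Subgraph, IsBlock K ∧ H ≤ K := by
  obtain ⟨K, hHK, hK, hmax⟩ := Finite.exists_le_maximal hH
  exact ⟨K, ⟨hK, fun K' hK' hle ↦ le_antisymm (hmax hK' hle) hle⟩, hHK⟩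

theorem IsBlockGraph.adj_of_mem_support_of_isCycle (hG : IsBlockGraph G) {u x y : V}
    {c : G.Walk u u} (hc : c.IsCycle) (hx : x ∈ c.support) (hy : y ∈ c.support) (hxy : x ≠ y) :
    G.Adj x y := by
  obtain ⟨K, hK, hcK⟩ := hc.subgraphBiconnected_toSubgraph.exists_isBlock_le
  exact (hG K hK x (hcK.1 (c.mem_verts_toSubgraph.mpr hx))
    y (hcK.1 (c.mem_verts_toSubgraph.mpr hy)) hxy).adj_sub

theorem IsBlockGraph.eq_of_isChordless (hG : IsBlockGraph G) {u v : V} {p q : G.Walk u v}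
    (hp : p.IsPath) (hq : q.IsPath) (hpc : p.IsChordless) (hqc : q.IsChordless) : p = q := by
  by_contra hne
  obtain ⟨x, y, p', q', hp', hq', hc⟩ := hp.exists_isCycle_of_ne hq hne
  have hlen := hc.three_le_length
  rw [length_append, length_reverse] at hlen
  have hp'p := isPath_of_isSubwalk hp' hp
  have hq'p := isPath_of_isSubwalk hq' hq
  obtain rfl | hxy := eq_or_ne x y
  · simp [(isPath_iff_nil.mp hp'p).length_eq_zero, (isPath_iff_nil.mp hq'p).length_eq_zero] at hlen
  have hadj : G.Adj x y := hG.adj_of_mem_support_of_isCycle hc (start_mem_support _)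
    (support_subset_support_append_left _ _ p'.end_mem_support) hxy
  have h1 := hp'p.length_eq_one_of_mem_edges ((hpc.of_isSubwalk hp hp').mem_edges
    p'.start_mem_support p'.end_mem_support hadj)
  have h2 := hq'p.length_eq_one_of_mem_edges ((hqc.of_isSubwalk hq hq').mem_edges
    q'.start_mem_support q'.end_mem_support hadj)
  omega

theorem IsBlockGraph.exists_append_append_support_eq_inter (hG : IsBlockGraph G)
    {a b a' b' : V} {p : G.Walk a b} {r : G.Walk a' b'} (hp : p.IsPath) (hpc : p.IsChordless)
    (hr : r.IsPath) (hrc : r.IsChordless) (hmeet : ∃ x ∈ p.support, x ∈ r.support) :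
    ∃ (c d : V) (p₁ : G.Walk a c) (g : G.Walk c d) (p₂ : G.Walk d b),
      p = p₁.append (g.append p₂) ∧
      (∀ x, x ∈ g.support ↔ x ∈ p.support ∧ x ∈ r.support) ∧
      ∀ e, e ∈ g.edges ↔ e ∈ p.edges ∧ e ∈ r.edges := by
  obtain ⟨c, hc, p₁, p', rfl, hfirst⟩ :=
    p.exists_split_at_first_mem (S := {x | x ∈ r.support}) hmeet
  obtain ⟨d, hd, g, p₂, rfl, hlast⟩ := p'.exists_split_at_last_mem ⟨c, p'.start_mem_support, hc⟩
  have hgp : g.IsSubwalk (p₁.append (g.append p₂)) := ⟨p₁, p₂, by rw [append_assoc]⟩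
  have hgc : g.IsChordless := hpc.of_isSubwalk hp hgp
  obtain ⟨s, hs, hsc, hsr⟩ := hrc.exists_subpath hr hc hd
  obtain rfl : g = s := hG.eq_of_isChordless (isPath_of_isSubwalk hgp hp) hs hgc hsc
  have hsupp : ∀ x, x ∈ g.support ↔ x ∈ (p₁.append (g.append p₂)).support ∧ x ∈ r.support := by
    refine fun x ↦ ⟨fun hx ↦ ⟨hgp.support_subset hx, hsr hx⟩, fun ⟨hxp, hxr⟩ ↦ ?_⟩
    simp only [mem_support_append_iff] at hxp
    rcases hxp with hx | hx | hx
    · exact hfirst x hx hxr ▸ g.start_mem_support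
    · exact hx
    · exact hlast x hx hxr ▸ g.end_mem_support
  exact ⟨c, d, p₁, g, p₂, rfl, hsupp, hgc.mem_edges_iff_of_mem_support_iff hpc hrc hsupp⟩

end BlockGraph

theorem blockGraph_inducedPaths_inter_decomposition_general {V : Type*} [Fintype V]
    {G : SimpleGraph V} (hBG : IsBlockGraph G) (Q R : InducedPath G)
    (hmeet : (Q.vertexSet ∩ R.vertexSet).Nonempty) :
    (pathsInter Q R).coe.Connected ∧
    ∃ (c d : V) (q1 : G.Walk Q.first c) (g : G.Walk c d) (q2 : G.Walk d Q.last)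
      (c' d' : V) (r1 : G.Walk R.first c') (g' : G.Walk c' d') (r2 : G.Walk d' R.last),
      Q.walk = q1.append (g.append q2) ∧
      R.walk = r1.append (g'.append r2) ∧
      {v : V | v ∈ g.support} = Q.vertexSet ∩ R.vertexSet ∧
      {e : Sym2 V | e ∈ g.edges} = Q.edgeSet ∩ R.edgeSet ∧
      {v : V | v ∈ g'.support} = Q.vertexSet ∩ R.vertexSet ∧
      {e : Sym2 V | e ∈ g'.edges} = Q.edgeSet ∩ R.edgeSet ∧
      (∀ (c₂ d₂ : V) (q1₂ : G.Walk Q.first c₂) (g₂ : G.Walk c₂ d₂) (q2₂ : G.Walk d₂ Q.last),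
        Q.walk = q1₂.append (g₂.append q2₂) →
        {v : V | v ∈ g₂.support} = Q.vertexSet ∩ R.vertexSet →
        {e : Sym2 V | e ∈ g₂.edges} = Q.edgeSet ∩ R.edgeSet →
        c₂ = c ∧ d₂ = d ∧ HEq q1₂ q1 ∧ HEq g₂ g ∧ HEq q2₂ q2) ∧
      (∀ (c₂ d₂ : V) (r1₂ : G.Walk R.first c₂) (g₂ : G.Walk c₂ d₂) (r2₂ : G.Walk d₂ R.last),
        R.walk = r1₂.append (g₂.append r2₂) →
        {v : V | v ∈ g₂.support} = Q.vertexSet ∩ R.vertexSet →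
        {e : Sym2 V | e ∈ g₂.edges} = Q.edgeSet ∩ R.edgeSet →
        c₂ = c' ∧ d₂ = d' ∧ HEq r1₂ r1 ∧ HEq g₂ g' ∧ HEq r2₂ r2) := by
  obtain ⟨x, hxQ, hxR⟩ := hmeet
  obtain ⟨c, d, q1, g, q2, hQ, hgV, hgE⟩ := hBG.exists_append_append_support_eq_inter
    Q.isPath Q.isChordless R.isPath R.isChordless ⟨x, hxQ, hxR⟩
  obtain ⟨c', d', r1, g', r2, hR, hgV', hgE'⟩ := hBG.exists_append_append_support_eq_inter
    R.isPath R.isChordless Q.isPath Q.isChordless ⟨x, hxR, hxQ⟩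
  have hgV'' : ∀ y, y ∈ g'.support ↔ y ∈ Q.walk.support ∧ y ∈ R.walk.support :=
    fun y ↦ (hgV' y).trans and_comm
  have hgE'' : ∀ e, e ∈ g'.edges ↔ e ∈ Q.walk.edges ∧ e ∈ R.walk.edges :=
    fun e ↦ (hgE' e).trans and_comm
  refine ⟨pathsInter_eq_toSubgraph Q R hgV hgE ▸ g.toSubgraph_connected.coe,
    c, d, q1, g, q2, c', d', r1, g', r2, hQ, hR, Set.ext hgV, Set.ext hgE, Set.ext hgV'',
    Set.ext hgE'', ?_, ?_⟩
  · intro c₂ d₂ q1₂ g₂ q2₂ hQ₂ hV₂ _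
    exact (hQ₂ ▸ Q.isPath).append_append_inj (hQ₂.symm.trans hQ)
      fun y ↦ (Set.ext_iff.mp hV₂ y).trans (hgV y).symm
  · intro c₂ d₂ r1₂ g₂ r2₂ hR₂ hV₂ _
    exact (hR₂ ▸ R.isPath).append_append_inj (hR₂.symm.trans hR)
      fun y ↦ (Set.ext_iff.mp hV₂ y).trans (hgV'' y).symm

/-- **Theorem (Statement 6).** If two induced paths `Q` and `R` of a finite simple
block graph intersect non-trivially, then `Q ∩ R` is connected, and there are unique
decompositions `Q = Q₁ * γ * Q₂` and `R = R₁ * γ * R₂` where `γ = Q ∩ R`. -/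
theorem blockGraph_inducedPaths_inter_decomposition {V : Type*} [Fintype V] [DecidableEq V]
    {G : SimpleGraph V} (hBG : IsBlockGraph G) (Q R : InducedPath G)
    (hmeet : (Q.vertexSet ∩ R.vertexSet).Nonempty) :
    (pathsInter Q R).coe.Connected ∧
    ∃ (c d : V) (q1 : G.Walk Q.first c) (g : G.Walk c d) (q2 : G.Walk d Q.last)
      (c' d' : V) (r1 : G.Walk R.first c') (g' : G.Walk c' d') (r2 : G.Walk d' R.last),
      Q.walk = q1.append (g.append q2) ∧
      R.walk = r1.append (g'.append r2) ∧
      {v : V | v ∈ g.support} = Q.vertexSet ∩ R.vertexSet ∧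
      {e : Sym2 V | e ∈ g.edges} = Q.edgeSet ∩ R.edgeSet ∧
      {v : V | v ∈ g'.support} = Q.vertexSet ∩ R.vertexSet ∧
      {e : Sym2 V | e ∈ g'.edges} = Q.edgeSet ∩ R.edgeSet ∧
      (∀ (c₂ d₂ : V) (q1₂ : G.Walk Q.first c₂) (g₂ : G.Walk c₂ d₂) (q2₂ : G.Walk d₂ Q.last),
        Q.walk = q1₂.append (g₂.append q2₂) →
        {v : V | v ∈ g₂.support} = Q.vertexSet ∩ R.vertexSet →
        {e : Sym2 V | e ∈ g₂.edges} = Q.edgeSet ∩ R.edgeSet →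
        c₂ = c ∧ d₂ = d ∧ HEq q1₂ q1 ∧ HEq g₂ g ∧ HEq q2₂ q2) ∧
      (∀ (c₂ d₂ : V) (r1₂ : G.Walk R.first c₂) (g₂ : G.Walk c₂ d₂) (r2₂ : G.Walk d₂ R.last),
        R.walk = r1₂.append (g₂.append r2₂) →
        {v : V | v ∈ g₂.support} = Q.vertexSet ∩ R.vertexSet →
        {e : Sym2 V | e ∈ g₂.edges} = Q.edgeSet ∩ R.edgeSet →
        c₂ = c' ∧ d₂ = d' ∧ HEq r1₂ r1 ∧ HEq g₂ g' ∧ HEq r2₂ r2) :=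
  blockGraph_inducedPaths_inter_decomposition_general hBG Q R hmeet
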